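/- arXiv:1907.03882 — 2 statements merged into one kernel-verified Lean document; each statement's English description precedes it below -/
import Mathlib

section
/- Let φ: ℝ/ℤ → ℝ be continuous and let a₀: ℝ/ℤ → ℝ be continuous with min a₀ > 0. Define g₀(t) = ∫_{{s : φ(s) ≤ t}} a₀(s) ds. If s₀ is a point with |φ(s) - φ(s₀)| ≤ c|s - s₀|² for all s near s₀ (for some c > 0), then g₀ is not Hölder continuous of any exponent α > 1/2 at t₀ = φ(s₀); indeed g₀(t₀+h) - g₀(t₀-h) ≥ √(h/c)·(min a₀) for all sufficiently small h > 0. -/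
/-!
Near a degenerate critical point, `|φ s - φ s₀| ≤ c |s - s₀|²`, so the whole arc of length
`√(h/c)` around `s₀` lies in the level band `{t₀ - h < φ ≤ t₀ + h}`. Since `a₀ ≥ m`, the
increment `g₀(t₀ + h) - g₀(t₀ - h) = ∫_{band} a₀` is at least `m √(h/c)`, a `√h` growth that no
Hölder bound `K h^α` with `α > 1/2` can accommodate as `h → 0`.
-/

open MeasureTheory Set Filter Topology

lemma closedBall_subset_preimage_Ioc_of_abs_sub_le_mul_sq {X : Type*} [PseudoMetricSpace X]
    {φ : X → ℝ} {s₀ : X} {c r ρ h : ℝ} (hc : 0 ≤ c)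
    (hdeg : ∀ s, dist s s₀ < r → |φ s - φ s₀| ≤ c * dist s s₀ ^ 2)
    (hρr : ρ < r) (hρh : c * ρ ^ 2 < h) :
    Metric.closedBall s₀ ρ ⊆ φ ⁻¹' Ioc (φ s₀ - h) (φ s₀ + h) := by
  intro s hs
  rw [Metric.mem_closedBall] at hs
  have hsq : c * dist s s₀ ^ 2 ≤ c * ρ ^ 2 := by gcongr
  have hclose := (hdeg s (hs.trans_lt hρr)).trans_lt (hsq.trans_lt hρh)
  obtain ⟨hlo, hhi⟩ := abs_lt.mp hclose
  exact ⟨by linarith, by linarith⟩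

lemma setIntegral_le_sub_setIntegral_le {X : Type*} [MeasurableSpace X] {μ : Measure X}
    {φ a : X → ℝ} (hφ : Measurable φ) (ha : Integrable a μ) {t u : ℝ} (htu : t ≤ u) :
    ∫ s in {s | φ s ≤ u}, a s ∂μ - ∫ s in {s | φ s ≤ t}, a s ∂μ
      = ∫ s in φ ⁻¹' Ioc t u, a s ∂μ := by
  have hband : φ ⁻¹' Ioc t u = {s | φ s ≤ u} \ {s | φ s ≤ t} := by
    ext s
    simp only [mem_preimage, mem_Ioc, Set.mem_sdiff, mem_ofPred_eq, not_le]
    exact and_comm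
  rw [hband]
  exact (setIntegral_sdiff (measurableSet_le hφ measurable_const) ha.integrableOn
    fun s (hs : φ s ≤ t) => show φ s ≤ u from hs.trans htu).symm

lemma mul_measureReal_le_setIntegral {X : Type*} [MeasurableSpace X] {μ : Measure X}
    [IsFiniteMeasure μ] {a : X → ℝ} {m : ℝ} (hm : 0 ≤ m) (hmin : ∀ x, m ≤ a x)
    (ha : Integrable a μ) {B S : Set X} (hS : MeasurableSet S) (hBS : B ⊆ S) :
    m * μ.real B ≤ ∫ x in S, a x ∂μ :=
  calc m * μ.real B ≤ m * μ.real S := by gcongr; exact measure_ne_top μ S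
    _ ≤ ∫ x in S, a x ∂μ :=
      setIntegral_ge_of_const_le_real hS (measure_ne_top μ S) (fun x _ => hmin x) ha.integrableOn

lemma sqrt_div_mul_le_setIntegral_preimage_Ioc {φ a : AddCircle (1 : ℝ) → ℝ}
    {s₀ : AddCircle (1 : ℝ)} {m c r h : ℝ} (hφ : Measurable φ) (ha : Integrable a)
    (hm : 0 ≤ m) (hmin : ∀ s, m ≤ a s) (hc : 0 < c) (hr : 0 < r)
    (hdeg : ∀ s, dist s s₀ < r → |φ s - φ s₀| ≤ c * dist s s₀ ^ 2)
    (hh : 0 < h) (hhc : h ≤ c) (hhr : h < c * r ^ 2) :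
    √(h / c) * m ≤ ∫ s in φ ⁻¹' Ioc (φ s₀ - h) (φ s₀ + h), a s := by
  have hsqrt_le_one : √(h / c) ≤ 1 := Real.sqrt_le_one.mpr ((div_le_one hc).mpr hhc)
  have hsqrt_lt_r : √(h / c) < r := (Real.sqrt_lt' hr).mpr ((div_lt_iff₀' hc).mpr hhr)
  have hρh : c * (√(h / c) / 2) ^ 2 < h := by
    rw [div_pow, Real.sq_sqrt (div_pos hh hc).le]
    field_simp
    linarith
  have hball := closedBall_subset_preimage_Ioc_of_abs_sub_le_mul_sq hc.le hdeg
    (by linarith [Real.sqrt_nonneg (h / c)]) hρh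
  have hvol : volume.real (Metric.closedBall s₀ (√(h / c) / 2)) = √(h / c) := by
    rw [measureReal_def, AddCircle.volume_closedBall, mul_div_cancel₀ _ two_ne_zero,
      min_eq_right hsqrt_le_one, ENNReal.toReal_ofReal (Real.sqrt_nonneg _)]
  rw [mul_comm, ← hvol]
  exact mul_measureReal_le_setIntegral hm hmin ha (measurableSet_Ioc.preimage hφ) hball

lemma not_holderAt_of_mul_sqrt_le_sub {g : ℝ → ℝ} {t₀ C h₀ α : ℝ} (hC : 0 < C) (hh₀ : 0 < h₀)
    (hinc : ∀ h, 0 < h → h < h₀ → C * √h ≤ g (t₀ + h) - g (t₀ - h)) (hα : 1 / 2 < α) :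
    ¬ ∃ K, ∀ τ, |g τ - g t₀| ≤ K * |τ - t₀| ^ α := by
  rintro ⟨K, hK⟩
  have hβ : 0 < α - 1 / 2 := by linarith
  have hbound : ∀ h, 0 < h → h < h₀ → C ≤ 2 * K * h ^ (α - 1 / 2) := by
    intro h hh hh_lt
    have hplus := hK (t₀ + h)
    have hminus := hK (t₀ - h)
    rw [add_sub_cancel_left, abs_of_pos hh] at hplus
    rw [sub_sub_cancel_left, abs_neg, abs_of_pos hh] at hminus
    have hsplit : h ^ α = √h * h ^ (α - 1 / 2) := by
      rw [Real.sqrt_eq_rpow, ← Real.rpow_add hh, add_sub_cancel]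
    have hle : √h * C ≤ √h * (2 * K * h ^ (α - 1 / 2)) :=
      calc √h * C = C * √h := mul_comm _ _
        _ ≤ g (t₀ + h) - g (t₀ - h) := hinc h hh hh_lt
        _ ≤ 2 * K * h ^ α := by linarith [(abs_le.mp hplus).2, (abs_le.mp hminus).1]
        _ = √h * (2 * K * h ^ (α - 1 / 2)) := by rw [hsplit]; ring
    exact le_of_mul_le_mul_left hle (Real.sqrt_pos.mpr hh)
  have hlim : Tendsto (fun h : ℝ => 2 * K * h ^ (α - 1 / 2)) (𝓝[>] 0) (𝓝 0) := by
    have := ((Real.continuous_rpow_const hβ.le).tendsto' 0 0 (Real.zero_rpow hβ.ne')).const_mul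
      (2 * K)
    rw [mul_zero] at this
    exact this.mono_left nhdsWithin_le_nhds
  have hC_le : C ≤ 0 := ge_of_tendsto hlim <| by
    filter_upwards [Ioo_mem_nhdsGT hh₀] with h hh using hbound h hh.1 hh.2
  linarith

/-- A degenerate critical point of `φ` produces a big singularity of the
distribution function `g₀(t) = ∫_{φ ≤ t} a₀`: near the critical value `t₀`,
`g₀(t₀+h) - g₀(t₀-h) ≥ √(h/c)·(min a₀)`, and `g₀` is not `α`-Hölder at `t₀`
for any `α > 1/2`. -/
theorem distribution_function_big_singularity
    (φ a₀ : AddCircle (1 : ℝ) → ℝ)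
    (hφ : Continuous φ) (ha₀ : Continuous a₀)
    (m : ℝ) (hm : 0 < m) (hmin : ∀ s, m ≤ a₀ s)
    (g₀ : ℝ → ℝ)
    (hg₀ : ∀ τ : ℝ, g₀ τ = ∫ s in {s : AddCircle (1 : ℝ) | φ s ≤ τ}, a₀ s)
    (s₀ : AddCircle (1 : ℝ)) (c : ℝ) (hc : 0 < c)
    (hdeg : ∃ r : ℝ, 0 < r ∧ ∀ s : AddCircle (1 : ℝ),
      dist s s₀ < r → |φ s - φ s₀| ≤ c * (dist s s₀) ^ 2) :
    (∃ h₀ : ℝ, 0 < h₀ ∧ ∀ h : ℝ, 0 < h → h < h₀ →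
        Real.sqrt (h / c) * m ≤ g₀ (φ s₀ + h) - g₀ (φ s₀ - h)) ∧
    (∀ α : ℝ, 1 / 2 < α →
      ¬ ∃ K : ℝ, ∀ τ : ℝ, |g₀ τ - g₀ (φ s₀)| ≤ K * |τ - φ s₀| ^ α) := by
  obtain ⟨r, hr, hdeg⟩ := hdeg
  have ha₀_int : Integrable a₀ :=
    ha₀.integrable_of_hasCompactSupport (HasCompactSupport.of_compactSpace a₀)
  have hh₀ : 0 < min c (c * r ^ 2) := lt_min hc (by positivity)
  have hinc : ∀ h, 0 < h → h < min c (c * r ^ 2) →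
      √(h / c) * m ≤ g₀ (φ s₀ + h) - g₀ (φ s₀ - h) := by
    intro h hh hh_lt
    obtain ⟨hhc, hhr⟩ := lt_min_iff.mp hh_lt
    rw [hg₀, hg₀, setIntegral_le_sub_setIntegral_le hφ.measurable ha₀_int (by linarith)]
    exact sqrt_div_mul_le_setIntegral_preimage_Ioc hφ.measurable ha₀_int hm.le hmin hc hr hdeg hh
      hhc.le hhr
  refine ⟨⟨_, hh₀, hinc⟩, fun α hα => ?_⟩
  refine not_holderAt_of_mul_sqrt_le_sub (div_pos hm (Real.sqrt_pos.mpr hc)) hh₀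
    (fun h hh hh_lt => ?_) hα
  calc m / √c * √h = √(h / c) * m := by rw [Real.sqrt_div' h hc.le]; ring
    _ ≤ g₀ (φ s₀ + h) - g₀ (φ s₀ - h) := hinc h hh hh_lt
end

section
/- Let φ: ℝ/ℤ → ℝ be smooth and a₀: ℝ/ℤ → ℝ be smooth and positive. Suppose that for some constant c₀ and some ε > 0, the oscillatory integral I(λ) = ∫_{ℝ/ℤ} e^{-iλφ(s)} a₀(s) ds satisfies I(λ) = c₀ + O(|λ|^{-1/2-ε}) as |λ| → ∞. Then every critical value of φ equals 0, and hence φ ≡ 0, i.e. φ(s) = 0 for all s. -/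
open Real Complex intervalIntegral

section Aux
open MeasureTheory Set

lemma fejer_cos {lam w : ℝ} (hl : 0 < lam) (hw : w ≠ 0) :
    ∫ ξ in (0:ℝ)..lam, (1 - ξ / lam) * Real.cos (ξ * w)
      = (1 - Real.cos (lam * w)) / (lam * w ^ 2) := by
  have key : ∀ ξ ∈ Set.uIcc (0:ℝ) lam,
      HasDerivAt (fun x : ℝ =>
          (1 - x / lam) * Real.sin (x * w) / w - Real.cos (x * w) / (lam * w ^ 2))
        ((1 - ξ / lam) * Real.cos (ξ * w)) ξ := by
    intro ξ _
    have h1 : HasDerivAt (fun x : ℝ => x * w) w ξ := by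
      simpa using (hasDerivAt_id ξ).mul_const w
    have hs : HasDerivAt (fun x : ℝ => Real.sin (x * w)) (Real.cos (ξ * w) * w) ξ := h1.sin
    have hc : HasDerivAt (fun x : ℝ => Real.cos (x * w)) (-Real.sin (ξ * w) * w) ξ := h1.cos
    have hlin : HasDerivAt (fun x : ℝ => 1 - x / lam) (-(1/lam)) ξ := by
      simpa using ((hasDerivAt_id ξ).div_const lam).const_sub 1
    have := ((hlin.mul hs).div_const w).sub (hc.div_const (lam * w ^ 2))
    refine HasDerivAt.congr_deriv this ?_
    field_simp
    ring
  rw [intervalIntegral.integral_eq_sub_of_hasDerivAt key (by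
    apply Continuous.intervalIntegrable
    continuity)]
  simp
  field_simp
  ring

lemma fejer_sin {lam w : ℝ} (hl : 0 < lam) (hw : w ≠ 0) :
    ∫ ξ in (0:ℝ)..lam, (1 - ξ / lam) * Real.sin (ξ * w)
      = 1 / w - Real.sin (lam * w) / (lam * w ^ 2) := by
  have key : ∀ ξ ∈ Set.uIcc (0:ℝ) lam,
      HasDerivAt (fun x : ℝ =>
          -((1 - x / lam) * Real.cos (x * w)) / w - Real.sin (x * w) / (lam * w ^ 2))
        ((1 - ξ / lam) * Real.sin (ξ * w)) ξ := by
    intro ξ _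
    have h1 : HasDerivAt (fun x : ℝ => x * w) w ξ := by
      simpa using (hasDerivAt_id ξ).mul_const w
    have hs : HasDerivAt (fun x : ℝ => Real.sin (x * w)) (Real.cos (ξ * w) * w) ξ := h1.sin
    have hc : HasDerivAt (fun x : ℝ => Real.cos (x * w)) (-Real.sin (ξ * w) * w) ξ := h1.cos
    have hlin : HasDerivAt (fun x : ℝ => 1 - x / lam) (-(1/lam)) ξ := by
      simpa using ((hasDerivAt_id ξ).div_const lam).const_sub 1
    have := (((hlin.mul hc).neg.div_const w)).sub (hs.div_const (lam * w ^ 2))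
    refine HasDerivAt.congr_deriv this ?_
    field_simp
    ring
  rw [intervalIntegral.integral_eq_sub_of_hasDerivAt key (by
    apply Continuous.intervalIntegrable
    continuity)]
  simp
  field_simp
  ring

lemma fejer_zero {lam : ℝ} (hl : 0 < lam) :
    ∫ ξ in (0:ℝ)..lam, (1 - ξ / lam) = lam / 2 := by
  have : ∀ ξ ∈ Set.uIcc (0:ℝ) lam,
      HasDerivAt (fun x : ℝ => x - x ^ 2 / (2 * lam)) (1 - ξ / lam) ξ := by
    intro ξ _
    have := (hasDerivAt_id ξ).sub (((hasDerivAt_pow 2 ξ)).div_const (2 * lam))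
    refine HasDerivAt.congr_deriv this ?_
    field_simp
    ring
  rw [intervalIntegral.integral_eq_sub_of_hasDerivAt this (by
    apply Continuous.intervalIntegrable; continuity)]
  field_simp
  ring

lemma one_sub_cos_ge {x : ℝ} (h : |x| ≤ 1) : x ^ 2 / 4 ≤ 1 - Real.cos x := by
  wlog hx : 0 ≤ x generalizing x
  · have := this (x := -x) (by simpa using h) (by linarith [not_le.mp hx])
    simpa using this
  rcases eq_or_lt_of_le hx with rfl | hx0
  · simp
  · have hx1 : x ≤ 1 := by rwa [_root_.abs_of_nonneg hx] at h
    have hhalf : Real.sin (x / 2) > x / 2 - (x / 2) ^ 3 / 4 :=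
      by have := Real.sin_gt_sub_cube (x := x / 2) (by linarith)
         nlinarith [pow_pos (by linarith : (0:ℝ) < x / 2) 3]
    have h2 : (x / 2) ^ 3 ≤ (x / 2) * (1 / 4) := by
      have : (x / 2) ^ 2 ≤ (1 / 2) ^ 2 := by nlinarith
      nlinarith
    have hsin : (15 / 32) * x ≤ Real.sin (x / 2) := by nlinarith
    have h2m := Real.cos_two_mul (x / 2)
    have hx2 : 2 * (x / 2) = x := by ring
    rw [hx2] at h2m
    have hpyth := Real.sin_sq_add_cos_sq (x / 2)
    have hcos : 1 - Real.cos x = 2 * Real.sin (x / 2) ^ 2 := by nlinarith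
    nlinarith

lemma kernel_nonneg {lam : ℝ} (hl : 0 < lam) (w : ℝ) :
    0 ≤ ∫ ξ in (0:ℝ)..lam, (1 - ξ / lam) * Real.cos (ξ * w) := by
  by_cases hw : w = 0
  · subst hw
    simp only [mul_zero, Real.cos_zero, mul_one]
    rw [fejer_zero hl]; positivity
  · rw [fejer_cos hl hw]
    have := Real.cos_le_one (lam * w)
    have hd : 0 < lam * w ^ 2 := by positivity
    exact div_nonneg (by linarith) hd.le

lemma kernel_big {lam w : ℝ} (hl : 0 < lam) (h : |lam * w| ≤ 1) :
    lam / 4 ≤ ∫ ξ in (0:ℝ)..lam, (1 - ξ / lam) * Real.cos (ξ * w) := by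
  by_cases hw : w = 0
  · subst hw
    simp only [mul_zero, Real.cos_zero, mul_one]
    rw [fejer_zero hl]; linarith
  · rw [fejer_cos hl hw]
    have hlow := one_sub_cos_ge h
    have hd : 0 < lam * w ^ 2 := by positivity
    rw [le_div_iff₀ hd]
    nlinarith [sq_nonneg (lam * w)]

lemma swap_interval {F : ℝ → ℝ → ℝ} (hF : Continuous (Function.uncurry F))
    {a b c d : ℝ} (hab : a ≤ b) (hcd : c ≤ d) :
    ∫ s in a..b, (∫ ξ in c..d, F s ξ) = ∫ ξ in c..d, (∫ s in a..b, F s ξ) := by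
  simp only [intervalIntegral.integral_of_le hab, intervalIntegral.integral_of_le hcd]
  apply MeasureTheory.integral_integral_swap
  rw [Measure.prod_restrict]
  have hcomp : IntegrableOn (Function.uncurry F) (Icc a b ×ˢ Icc c d)
      (volume.prod volume) := by
    apply ContinuousOn.integrableOn_compact (isCompact_Icc.prod isCompact_Icc)
      hF.continuousOn
  exact hcomp.mono_set (Set.prod_mono Ioc_subset_Icc_self Ioc_subset_Icc_self)

lemma re_eq {φ a₀ : ℝ → ℝ} (hφc : Continuous φ) (ha₀c : Continuous a₀) (ξ v : ℝ) :
    ∫ s in (0:ℝ)..1, a₀ s * Real.cos (ξ * (v - φ s))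
      = (Complex.exp (Complex.I * ξ * v) *
          ∫ s in (0:ℝ)..1, Complex.exp (-Complex.I * ξ * φ s) * (a₀ s : ℂ)).re := by
  have hint : IntervalIntegrable
      (fun s => Complex.exp (Complex.I * ξ * v) * (Complex.exp (-Complex.I * ξ * φ s) * (a₀ s : ℂ)))
      volume 0 1 := by
    apply Continuous.intervalIntegrable
    continuity
  rw [← intervalIntegral.integral_const_mul]
  rw [← Complex.reCLM_apply, ← ContinuousLinearMap.intervalIntegral_comp_comm Complex.reCLM hint]
  apply intervalIntegral.integral_congr
  intro s _
  have hexp : Complex.exp (Complex.I * ξ * v) * Complex.exp (-Complex.I * ξ * φ s)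
      = Complex.exp ((ξ * (v - φ s) : ℝ) * Complex.I) := by
    rw [← Complex.exp_add]
    congr 1
    push_cast
    ring
  simp only [Complex.reCLM_apply]
  rw [← mul_assoc, hexp, Complex.mul_re,
    Complex.exp_ofReal_mul_I_re, Complex.exp_ofReal_mul_I_im]
  simp
  ring

lemma periodic_reduce {f : ℝ → ℝ} (hp : Function.Periodic f 1) (s : ℝ) :
    f s = f (Int.fract s) := by
  rw [Int.fract]
  have := hp.sub_int_mul_eq (x := s) ⌊s⌋
  simpa using this.symm

lemma periodic_bddAbove {f : ℝ → ℝ} (hf : Continuous f) (hp : Function.Periodic f 1) :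
    ∃ A, 0 ≤ A ∧ ∀ s, |f s| ≤ A := by
  obtain ⟨C, hC⟩ := (isCompact_Icc (a := (0:ℝ)) (b := 1)).exists_bound_of_continuousOn
    hf.continuousOn
  refine ⟨max C 0, le_max_right _ _, fun s => ?_⟩
  rw [periodic_reduce hp s]
  have : Int.fract s ∈ Icc (0:ℝ) 1 :=
    ⟨Int.fract_nonneg s, (Int.fract_lt_one s).le⟩
  exact le_trans (hC _ this) (le_max_left _ _)

lemma periodic_pos_lb {f : ℝ → ℝ} (hf : Continuous f) (hp : Function.Periodic f 1)
    (hpos : ∀ s, 0 < f s) : ∃ m, 0 < m ∧ ∀ s, m ≤ f s := by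
  obtain ⟨p, hpmem, hmin⟩ := (isCompact_Icc (a := (0:ℝ)) (b := 1)).exists_isMinOn
    (by norm_num) hf.continuousOn
  refine ⟨f p, hpos p, fun s => ?_⟩
  rw [periodic_reduce hp s]
  exact hmin ⟨Int.fract_nonneg s, (Int.fract_lt_one s).le⟩

lemma periodic_max_crit {f : ℝ → ℝ} (hf : Differentiable ℝ f) (hp : Function.Periodic f 1) :
    ∃ p, deriv f p = 0 ∧ ∀ s, f s ≤ f p := by
  obtain ⟨p, hpmem, hmax⟩ := (isCompact_Icc (a := (0:ℝ)) (b := 1)).exists_isMaxOn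
    (by norm_num) (hf.continuous).continuousOn
  have hglob : ∀ s, f s ≤ f p := by
    intro s
    rw [periodic_reduce hp s]
    exact hmax ⟨Int.fract_nonneg s, (Int.fract_lt_one s).le⟩
  exact ⟨p, IsLocalMax.deriv_eq_zero (Filter.Eventually.of_forall hglob), hglob⟩

lemma taylor_bound {φ : ℝ → ℝ} (hφ : ContDiff ℝ (⊤ : ℕ∞) φ) (s₀ : ℝ) (hcrit : deriv φ s₀ = 0)
    {M : ℝ} (hM : ∀ x ∈ Icc s₀ (s₀ + 1), |deriv (deriv φ) x| ≤ M) :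
    ∀ s ∈ Icc s₀ (s₀ + 1), |φ s - φ s₀| ≤ M * (s - s₀) ^ 2 := by
  have hφ2 : ContDiff ℝ ((⊤:ℕ∞) : WithTop ℕ∞) φ := hφ.of_le (by simp)
  have hφ' : ContDiff ℝ ((⊤:ℕ∞) : WithTop ℕ∞) (deriv φ) := (contDiff_infty_iff_deriv.mp hφ2).2
  have hM0 : 0 ≤ M := le_trans (abs_nonneg _) (hM s₀ ⟨le_rfl, by linarith⟩)
  intro s hs
  have hsub : Icc s₀ s ⊆ Icc s₀ (s₀ + 1) := Icc_subset_Icc le_rfl hs.2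
  have hd1 : ∀ x ∈ Icc s₀ s, |deriv φ x| ≤ M * (s - s₀) := by
    intro x hx
    have h1 : ∀ y ∈ Icc s₀ s, HasDerivWithinAt (deriv φ) (deriv (deriv φ) y) (Icc s₀ s) y :=
      fun y _ => ((hφ'.differentiable (by simp) y).hasDerivAt).hasDerivWithinAt
    have h2 := norm_image_sub_le_of_norm_deriv_le_segment' h1
      (fun y hy => hM y (hsub (Ico_subset_Icc_self hy))) x hx
    rw [hcrit, sub_zero] at h2
    calc |deriv φ x| ≤ M * (x - s₀) := h2
      _ ≤ M * (s - s₀) := by nlinarith [hx.2]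
  have h3 : ∀ y ∈ Icc s₀ s, HasDerivWithinAt φ (deriv φ y) (Icc s₀ s) y :=
    fun y _ => ((hφ2.differentiable (by simp) y).hasDerivAt).hasDerivWithinAt
  have h4 := norm_image_sub_le_of_norm_deriv_le_segment' h3
    (fun y hy => hd1 y (Ico_subset_Icc_self hy)) s (right_mem_Icc.2 hs.1)
  calc |φ s - φ s₀| ≤ M * (s - s₀) * (s - s₀) := h4
    _ = M * (s - s₀) ^ 2 := by ring

end Aux
section Crit
open MeasureTheory Set Filter

set_option maxHeartbeats 1000000 in
lemma crit_val_eq_zero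
    (φ a₀ : ℝ → ℝ)
    (hφ : ContDiff ℝ (⊤ : ℕ∞) φ) (hφper : Function.Periodic φ 1)
    (ha₀c : Continuous a₀) (ha₀per : Function.Periodic a₀ 1)
    (ha₀pos : ∀ s, 0 < a₀ s)
    (c₀ : ℂ) (ε Cb : ℝ) (hε : 0 < ε)
    (hI : ∀ lam : ℝ, 1 ≤ |lam| →
      ‖(∫ s in (0:ℝ)..1, Complex.exp (-Complex.I * lam * φ s) * (a₀ s : ℂ)) - c₀‖
        ≤ Cb * |lam| ^ (-(1 / 2 : ℝ) - ε))
    (s₀ : ℝ) (hcrit : deriv φ s₀ = 0) : φ s₀ = 0 := by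
  by_contra hv
  have hφc : Continuous φ := hφ.continuous
  set v : ℝ := φ s₀ with hvdef
  set J : ℝ → ℂ := fun ξ => ∫ s in (0:ℝ)..1, Complex.exp (-Complex.I * ξ * φ s) * (a₀ s : ℂ)
    with hJdef
  -- basic constants
  set ε' : ℝ := min ε (1/4) with hε'def
  have hε'0 : 0 < ε' := lt_min hε (by norm_num)
  have hε'4 : ε' ≤ 1/4 := min_le_right _ _
  have hCb : 0 ≤ Cb := by
    have := hI 1 (by norm_num)
    simp only [abs_one, Real.one_rpow, mul_one] at this
    exact le_trans (norm_nonneg _) this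
  have hI' : ∀ ξ : ℝ, 1 ≤ ξ → ‖J ξ - c₀‖ ≤ Cb * ξ ^ (-(1/2 : ℝ) - ε') := by
    intro ξ hξ
    have h0 : (0:ℝ) < ξ := by linarith
    have h1 := hI ξ (by rwa [abs_of_pos h0])
    rw [abs_of_pos h0] at h1
    refine h1.trans (mul_le_mul_of_nonneg_left ?_ hCb)
    have hmin : ε' ≤ ε := min_le_left _ _
    exact Real.rpow_le_rpow_of_exponent_le hξ (by linarith)
  obtain ⟨A₀, hA₀0, hA₀⟩ := periodic_bddAbove ha₀c ha₀per
  obtain ⟨m, hm0, hm⟩ := periodic_pos_lb ha₀c ha₀per ha₀pos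
  -- second derivative bound
  have hφ2 : ContDiff ℝ ((⊤:ℕ∞) : WithTop ℕ∞) φ := hφ.of_le (by simp)
  have hφ'cd : ContDiff ℝ ((⊤:ℕ∞) : WithTop ℕ∞) (deriv φ) := (contDiff_infty_iff_deriv.mp hφ2).2
  have hφ''c : Continuous (deriv (deriv φ)) := (contDiff_infty_iff_deriv.mp hφ'cd).2.continuous
  obtain ⟨M₀, hM₀⟩ := (isCompact_Icc (a := s₀) (b := s₀+1)).exists_bound_of_continuousOn
    hφ''c.continuousOn
  set M : ℝ := max M₀ 1 with hMdef
  have hM1 : (1:ℝ) ≤ M := le_max_right _ _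
  have hM0 : (0:ℝ) < M := by linarith
  have hM : ∀ x ∈ Icc s₀ (s₀+1), |deriv (deriv φ) x| ≤ M :=
    fun x hx => le_trans (hM₀ x hx) (le_max_left _ _)
  have htay := taylor_bound hφ s₀ hcrit hM
  -- the real field `i` and remainder `r`
  set i : ℝ → ℝ := fun ξ => ∫ s in (0:ℝ)..1, a₀ s * Real.cos (ξ * (v - φ s)) with hidef
  have hicont : Continuous i := by
    apply intervalIntegral.continuous_parametric_intervalIntegral_of_continuous'
      (f := fun (ξ : ℝ) (s : ℝ) => a₀ s * Real.cos (ξ * (v - φ s)))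
    apply Continuous.mul
    · exact ha₀c.comp continuous_snd
    · exact Real.continuous_cos.comp
        (continuous_fst.mul ((continuous_const.sub (hφc.comp continuous_snd))))
  have hiJ : ∀ ξ, i ξ = (Complex.exp (Complex.I * ξ * v) * J ξ).re :=
    fun ξ => re_eq hφc ha₀c ξ v
  set r : ℝ → ℝ := fun ξ =>
      i ξ - (c₀.re * Real.cos (ξ * v) - c₀.im * Real.sin (ξ * v)) with hrdef
  have hrcont : Continuous r := by
    apply hicont.sub
    exact (continuous_const.mul (Real.continuous_cos.comp (continuous_id.mul
      continuous_const))).sub (continuous_const.mul (Real.continuous_sin.comp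
      (continuous_id.mul continuous_const)))
  have hrram : ∀ ξ : ℝ, r ξ = (Complex.exp (Complex.I * ξ * v) * (J ξ - c₀)).re := by
    intro ξ
    have hre : (Complex.exp (Complex.I * ξ * v) * c₀).re
        = c₀.re * Real.cos (ξ * v) - c₀.im * Real.sin (ξ * v) := by
      have hexp : Complex.exp (Complex.I * ξ * v) = Complex.exp ((ξ * v : ℝ) * Complex.I) := by
        congr 1; push_cast; ring
      rw [hexp, Complex.mul_re, Complex.exp_ofReal_mul_I_re, Complex.exp_ofReal_mul_I_im]
      ring
    rw [hrdef]
    simp only [mul_sub, Complex.sub_re, hre, hiJ ξ]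
  have hrbound : ∀ ξ : ℝ, |r ξ| ≤ ‖J ξ - c₀‖ := by
    intro ξ
    rw [hrram ξ]
    calc |(Complex.exp (Complex.I * ξ * v) * (J ξ - c₀)).re|
        ≤ ‖Complex.exp (Complex.I * ξ * v) * (J ξ - c₀)‖ := Complex.abs_re_le_norm _
      _ = ‖Complex.exp (Complex.I * ξ * v)‖ * ‖J ξ - c₀‖ := norm_mul _ _
      _ = ‖J ξ - c₀‖ := by
          have hexp : Complex.exp (Complex.I * ξ * v)
              = Complex.exp ((ξ * v : ℝ) * Complex.I) := by congr 1; push_cast; ring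
          rw [hexp, Complex.norm_exp_ofReal_mul_I, one_mul]
  have hJb : ∀ ξ : ℝ, ‖J ξ - c₀‖ ≤ A₀ + ‖c₀‖ := by
    intro ξ
    have h1 : ‖J ξ‖ ≤ A₀ := by
      show ‖∫ s in (0:ℝ)..1, Complex.exp (-Complex.I * ξ * φ s) * (a₀ s : ℂ)‖ ≤ A₀
      have := intervalIntegral.norm_integral_le_of_norm_le_const
        (a := 0) (b := 1) (C := A₀)
        (f := fun s => Complex.exp (-Complex.I * ξ * φ s) * (a₀ s : ℂ)) ?_
      · simpa using this
      · intro x _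
        rw [norm_mul]
        have hexp : Complex.exp (-Complex.I * ξ * φ x)
            = Complex.exp ((-(ξ * φ x) : ℝ) * Complex.I) := by congr 1; push_cast; ring
        rw [hexp, Complex.norm_exp_ofReal_mul_I, one_mul, Complex.norm_real]
        exact hA₀ x
    calc ‖J ξ - c₀‖ ≤ ‖J ξ‖ + ‖c₀‖ := norm_sub_le _ _
      _ ≤ A₀ + ‖c₀‖ := by linarith
  -- main constants
  set c : ℝ := m / (4 * Real.sqrt M) with hcdef
  have hc0 : 0 < c := by
    apply div_pos hm0
    have := Real.sqrt_pos.mpr hM0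
    linarith
  set D : ℝ := ‖c₀‖ * (3 / v ^ 2 + 1 / |v|) + (A₀ + ‖c₀‖) with hDdef
  -- master inequality
  have key : ∀ lam : ℝ, 1 ≤ lam →
      c * Real.sqrt lam ≤ D + 4 * Cb * lam ^ ((1:ℝ)/2 - ε') := by
    intro lam hlam
    have hlam0 : (0:ℝ) < lam := by linarith
    set F : ℝ → ℝ → ℝ := fun s ξ => a₀ s * ((1 - ξ / lam) * Real.cos (ξ * (v - φ s)))
      with hFdef
    have hFc : Continuous (Function.uncurry F) := by
      apply Continuous.mul
      · exact ha₀c.comp continuous_fst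
      · apply Continuous.mul
        · exact continuous_const.sub (continuous_snd.div_const lam)
        · exact Real.continuous_cos.comp
            (continuous_snd.mul (continuous_const.sub (hφc.comp continuous_fst)))
    set P : ℝ := ∫ s in s₀..(s₀+1), ∫ ξ in (0:ℝ)..lam, F s ξ with hPdef
    -- inner integral in ξ
    have hinner : ∀ s : ℝ, (∫ ξ in (0:ℝ)..lam, F s ξ)
        = a₀ s * ∫ ξ in (0:ℝ)..lam, (1 - ξ / lam) * Real.cos (ξ * (v - φ s)) := by
      intro s
      rw [hFdef]
      exact intervalIntegral.integral_const_mul _ _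
    have hinner_cont : Continuous fun s => ∫ ξ in (0:ℝ)..lam, F s ξ :=
      intervalIntegral.continuous_parametric_intervalIntegral_of_continuous' hFc 0 lam
    have hinner_nonneg : ∀ s : ℝ, 0 ≤ ∫ ξ in (0:ℝ)..lam, F s ξ := by
      intro s
      rw [hinner s]
      exact mul_nonneg (ha₀pos s).le (kernel_nonneg hlam0 _)
    -- lower bound
    set δ : ℝ := 1 / Real.sqrt (M * lam) with hδdef
    have hMl1 : (1:ℝ) ≤ M * lam := by nlinarith
    have hsq : (0:ℝ) < Real.sqrt (M * lam) := Real.sqrt_pos.mpr (by nlinarith)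
    have hδ0 : 0 < δ := by positivity
    have hδ1 : δ ≤ 1 := by
      rw [hδdef, div_le_one hsq]
      exact Real.one_le_sqrt.mpr hMl1
    have hδsq : M * δ ^ 2 = 1 / lam := by
      rw [hδdef, div_pow, one_pow, Real.sq_sqrt (by nlinarith : (0:ℝ) ≤ M * lam)]
      field_simp
    have hlow1 : ∀ s ∈ Icc s₀ (s₀ + δ), m * (lam / 4) ≤ ∫ ξ in (0:ℝ)..lam, F s ξ := by
      intro s hs
      rw [hinner s]
      have hmem : s ∈ Icc s₀ (s₀ + 1) := ⟨hs.1, by linarith [hs.2]⟩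
      have habsw : |v - φ s| ≤ 1 / lam := by
        have h1 := htay s hmem
        have h2 : (s - s₀) ^ 2 ≤ δ ^ 2 := by nlinarith [hs.1, hs.2]
        have : |φ s - v| ≤ 1 / lam := by
          calc |φ s - v| ≤ M * (s - s₀) ^ 2 := h1
            _ ≤ M * δ ^ 2 := by nlinarith
            _ = 1 / lam := hδsq
        rwa [abs_sub_comm] at this
      have hw : |lam * (v - φ s)| ≤ 1 := by
        rw [abs_mul, abs_of_pos hlam0]
        calc lam * |v - φ s| ≤ lam * (1 / lam) := by
              exact mul_le_mul_of_nonneg_left habsw hlam0.le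
          _ = 1 := by field_simp
      exact mul_le_mul (hm s) (kernel_big hlam0 hw) (by positivity) (ha₀pos s).le
    have hlower : c * Real.sqrt lam ≤ P := by
      have step1 : ∫ s in s₀..(s₀ + δ), (m * (lam / 4)) ≤
          ∫ s in s₀..(s₀ + δ), ∫ ξ in (0:ℝ)..lam, F s ξ := by
        apply intervalIntegral.integral_mono_on (by linarith)
          intervalIntegrable_const (hinner_cont.intervalIntegrable _ _)
        exact hlow1
      have step2 : (∫ s in s₀..(s₀ + δ), ∫ ξ in (0:ℝ)..lam, F s ξ) ≤ P := by
        rw [hPdef]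
        apply intervalIntegral.integral_mono_interval (le_refl s₀) (by linarith) (by linarith)
        · exact Filter.Eventually.of_forall hinner_nonneg
        · exact hinner_cont.intervalIntegrable _ _
      have hconst : (∫ s in s₀..(s₀ + δ), (m * (lam / 4))) = δ * (m * (lam / 4)) := by
        simp
        ring
      have heq : c * Real.sqrt lam = δ * (m * (lam / 4)) := by
        have hsM : Real.sqrt (M * lam) = Real.sqrt M * Real.sqrt lam :=
          Real.sqrt_mul hM0.le lam
        have hml : Real.sqrt lam * Real.sqrt lam = lam := Real.mul_self_sqrt hlam0.le
        have hsM0 : 0 < Real.sqrt M := Real.sqrt_pos.mpr hM0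
        have hsl0 : 0 < Real.sqrt lam := Real.sqrt_pos.mpr hlam0
        rw [hcdef, hδdef, hsM]
        field_simp
        first
        | linear_combination (4*m*Real.sqrt M) * hml
        | linear_combination (-(4*m*Real.sqrt M)) * hml
        | linear_combination (m*Real.sqrt M) * hml
        | nlinarith [hml, hsM0, hsl0]
      rw [heq]
      calc δ * (m * (lam / 4)) = ∫ s in s₀..(s₀ + δ), (m * (lam / 4)) := hconst.symm
        _ ≤ ∫ s in s₀..(s₀ + δ), ∫ ξ in (0:ℝ)..lam, F s ξ := step1
        _ ≤ P := step2
    -- upper bound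
    have hswap : P = ∫ ξ in (0:ℝ)..lam, ∫ s in s₀..(s₀+1), F s ξ :=
      swap_interval hFc (by linarith) hlam0.le
    have hper : ∀ ξ : ℝ, (∫ s in s₀..(s₀+1), F s ξ) = (1 - ξ / lam) * i ξ := by
      intro ξ
      have hperfun : Function.Periodic (fun s => a₀ s * Real.cos (ξ * (v - φ s))) 1 := by
        intro x
        simp [ha₀per x, hφper x]
      calc (∫ s in s₀..(s₀+1), F s ξ)
          = ∫ s in s₀..(s₀+1), (1 - ξ / lam) * (a₀ s * Real.cos (ξ * (v - φ s))) := by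
            apply intervalIntegral.integral_congr
            intro s _
            rw [hFdef]
            ring
        _ = (1 - ξ / lam) * ∫ s in s₀..(s₀+1), a₀ s * Real.cos (ξ * (v - φ s)) :=
            intervalIntegral.integral_const_mul _ _
        _ = (1 - ξ / lam) * i ξ := by
            congr 1
            have := hperfun.intervalIntegral_add_eq s₀ 0
            rw [this]
            rw [hidef]
            norm_num
    have hPrep : P = ∫ ξ in (0:ℝ)..lam,
        (c₀.re * ((1 - ξ / lam) * Real.cos (ξ * v))
          - c₀.im * ((1 - ξ / lam) * Real.sin (ξ * v))
          + (1 - ξ / lam) * r ξ) := by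
      rw [hswap]
      apply intervalIntegral.integral_congr
      intro ξ _
      simp only
      rw [hper ξ]
      simp only [hrdef]
      ring
    have hint1 : IntervalIntegrable (fun ξ : ℝ => c₀.re * ((1 - ξ / lam) * Real.cos (ξ * v)))
        volume 0 lam := by
      apply Continuous.intervalIntegrable
      exact continuous_const.mul ((continuous_const.sub (continuous_id.div_const lam)).mul
        (Real.continuous_cos.comp (continuous_id.mul continuous_const)))
    have hint2 : IntervalIntegrable (fun ξ : ℝ => c₀.im * ((1 - ξ / lam) * Real.sin (ξ * v)))
        volume 0 lam := by
      apply Continuous.intervalIntegrable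
      exact continuous_const.mul ((continuous_const.sub (continuous_id.div_const lam)).mul
        (Real.continuous_sin.comp (continuous_id.mul continuous_const)))
    have hint3 : IntervalIntegrable (fun ξ : ℝ => (1 - ξ / lam) * r ξ)
        volume 0 lam := by
      apply Continuous.intervalIntegrable
      exact (continuous_const.sub (continuous_id.div_const lam)).mul hrcont
    have hsplit : P = (∫ ξ in (0:ℝ)..lam, c₀.re * ((1 - ξ / lam) * Real.cos (ξ * v)))
        - (∫ ξ in (0:ℝ)..lam, c₀.im * ((1 - ξ / lam) * Real.sin (ξ * v)))
        + (∫ ξ in (0:ℝ)..lam, (1 - ξ / lam) * r ξ) := by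
      rw [hPrep, intervalIntegral.integral_add (hint1.sub hint2) hint3,
          intervalIntegral.integral_sub hint1 hint2]
    -- bound term 1
    have hv2 : (0:ℝ) < v ^ 2 := by positivity
    have hb1 : |∫ ξ in (0:ℝ)..lam, c₀.re * ((1 - ξ / lam) * Real.cos (ξ * v))|
        ≤ ‖c₀‖ * (2 / v ^ 2) := by
      rw [intervalIntegral.integral_const_mul, fejer_cos hlam0 hv, abs_mul]
      apply mul_le_mul (Complex.abs_re_le_norm c₀)
      · rw [abs_div]
        have hc1 : |1 - Real.cos (lam * v)| ≤ 2 := by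
          have h1 := Real.cos_le_one (lam * v)
          have h2 := Real.neg_one_le_cos (lam * v)
          rw [abs_le]; constructor <;> linarith
        have hd : |lam * v ^ 2| = lam * v ^ 2 := abs_of_pos (by positivity)
        rw [hd]
        rw [div_le_div_iff₀ (by positivity) (by positivity)]
        nlinarith
      · exact abs_nonneg _
      · exact norm_nonneg _
    -- bound term 2
    have hb2 : |∫ ξ in (0:ℝ)..lam, c₀.im * ((1 - ξ / lam) * Real.sin (ξ * v))|
        ≤ ‖c₀‖ * (1 / |v| + 1 / v ^ 2) := by
      rw [intervalIntegral.integral_const_mul, fejer_sin hlam0 hv, abs_mul]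
      apply mul_le_mul (Complex.abs_im_le_norm c₀)
      · have h1 : |1 / v| = 1 / |v| := by rw [abs_div, abs_one]
        have h2 : |Real.sin (lam * v) / (lam * v ^ 2)| ≤ 1 / v ^ 2 := by
          rw [abs_div]
          have hd : |lam * v ^ 2| = lam * v ^ 2 := abs_of_pos (by positivity)
          rw [hd, div_le_div_iff₀ (by positivity) (by positivity)]
          have := Real.abs_sin_le_one (lam * v)
          nlinarith [abs_nonneg (Real.sin (lam * v))]
        calc |1 / v - Real.sin (lam * v) / (lam * v ^ 2)|
            ≤ |1 / v| + |Real.sin (lam * v) / (lam * v ^ 2)| := abs_sub _ _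
          _ ≤ 1 / |v| + 1 / v ^ 2 := by rw [h1]; linarith
      · exact abs_nonneg _
      · exact norm_nonneg _
    -- bound term 3
    have hb3 : |∫ ξ in (0:ℝ)..lam, (1 - ξ / lam) * r ξ|
        ≤ (A₀ + ‖c₀‖) + 4 * Cb * lam ^ ((1:ℝ)/2 - ε') := by
      have hwt : ∀ ξ : ℝ, ξ ∈ Set.Icc (0:ℝ) lam → |1 - ξ / lam| ≤ 1 := by
        intro ξ hξ
        rw [abs_le]
        have hq1 : ξ / lam ≤ 1 := (div_le_one hlam0).mpr hξ.2
        have hq2 : 0 ≤ ξ / lam := div_nonneg hξ.1 hlam0.le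
        constructor <;> linarith
      have hcont13 : Continuous (fun ξ : ℝ => (1 - ξ / lam) * r ξ) :=
        (continuous_const.sub (continuous_id.div_const lam)).mul hrcont
      have h01 : IntervalIntegrable (fun ξ : ℝ => (1 - ξ / lam) * r ξ) volume 0 1 :=
        hcont13.intervalIntegrable _ _
      have h1l : IntervalIntegrable (fun ξ : ℝ => (1 - ξ / lam) * r ξ) volume 1 lam :=
        hcont13.intervalIntegrable _ _
      have hsplit3 : (∫ ξ in (0:ℝ)..lam, (1 - ξ / lam) * r ξ)
          = (∫ ξ in (0:ℝ)..1, (1 - ξ / lam) * r ξ)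
            + ∫ ξ in (1:ℝ)..lam, (1 - ξ / lam) * r ξ :=
        (intervalIntegral.integral_add_adjacent_intervals h01 h1l).symm
      have hp1 : |∫ ξ in (0:ℝ)..1, (1 - ξ / lam) * r ξ| ≤ (A₀ + ‖c₀‖) := by
        have hbd : ∀ x ∈ Set.uIoc (0:ℝ) 1, ‖(1 - x / lam) * r x‖ ≤ (A₀ + ‖c₀‖) := by
          intro x hx
          rw [Set.uIoc_of_le (by norm_num : (0:ℝ) ≤ 1)] at hx
          have hx' : x ∈ Set.Icc (0:ℝ) lam := ⟨hx.1.le, le_trans hx.2 hlam⟩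
          rw [Real.norm_eq_abs, abs_mul]
          calc |1 - x / lam| * |r x| ≤ 1 * (A₀ + ‖c₀‖) := by
                apply mul_le_mul (hwt x hx') ((hrbound x).trans (hJb x)) (abs_nonneg _)
                norm_num
            _ = A₀ + ‖c₀‖ := one_mul _
        have := intervalIntegral.norm_integral_le_of_norm_le_const hbd
        simpa using this
      have hp2 : |∫ ξ in (1:ℝ)..lam, (1 - ξ / lam) * r ξ|
          ≤ 4 * Cb * lam ^ ((1:ℝ)/2 - ε') := by
        have hg : IntervalIntegrable (fun ξ : ℝ => Cb * ξ ^ (-(1/2:ℝ) - ε')) volume 1 lam := by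
          apply ContinuousOn.intervalIntegrable
          apply continuousOn_const.mul
          intro x hx
          rw [Set.uIcc_of_le hlam] at hx
          have hx0 : x ≠ 0 := by
            have := hx.1; intro h; rw [h] at this; linarith
          exact (Real.continuousAt_rpow_const x _ (Or.inl hx0)).continuousWithinAt
        have hae : ∀ᵐ t ∂(MeasureTheory.volume.restrict (Set.uIoc 1 lam)),
            ‖(1 - t / lam) * r t‖ ≤ Cb * t ^ (-(1/2:ℝ) - ε') := by
          rw [MeasureTheory.ae_restrict_iff' measurableSet_uIoc]
          apply Filter.Eventually.of_forall
          intro t ht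
          rw [Set.uIoc_of_le hlam] at ht
          have ht1 : (1:ℝ) ≤ t := ht.1.le
          have ht' : t ∈ Set.Icc (0:ℝ) lam := ⟨by linarith, ht.2⟩
          rw [Real.norm_eq_abs, abs_mul]
          calc |1 - t / lam| * |r t| ≤ 1 * (Cb * t ^ (-(1/2:ℝ) - ε')) := by
                apply mul_le_mul (hwt t ht') ((hrbound t).trans (hI' t ht1)) (abs_nonneg _)
                norm_num
            _ = Cb * t ^ (-(1/2:ℝ) - ε') := one_mul _
        have hmain := intervalIntegral.norm_integral_le_of_norm_le hlam
          (by rw [Set.uIoc_of_le hlam] at hae; exact (MeasureTheory.ae_restrict_iff' measurableSet_Ioc).mp hae) hg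
        rw [Real.norm_eq_abs] at hmain
        refine hmain.trans ?_
        have hexp1 : -(1/2:ℝ) - ε' + 1 = (1:ℝ)/2 - ε' := by ring
        have hval : (∫ t in (1:ℝ)..lam, Cb * t ^ (-(1/2:ℝ) - ε'))
            = Cb * ((lam ^ ((1:ℝ)/2 - ε') - 1) / ((1:ℝ)/2 - ε')) := by
          rw [intervalIntegral.integral_const_mul, integral_rpow (Or.inl (by linarith))]
          rw [Real.one_rpow, hexp1]
        rw [hval]
        have hp0 : (0:ℝ) < (1:ℝ)/2 - ε' := by linarith
        have hy1 : (1:ℝ) ≤ lam ^ ((1:ℝ)/2 - ε') := Real.one_le_rpow hlam hp0.le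
        have habs : |Cb * ((lam ^ ((1:ℝ)/2 - ε') - 1) / ((1:ℝ)/2 - ε'))|
            = Cb * ((lam ^ ((1:ℝ)/2 - ε') - 1) / ((1:ℝ)/2 - ε')) := by
          apply _root_.abs_of_nonneg
          apply mul_nonneg hCb
          apply div_nonneg (by linarith) hp0.le
        rw [mul_comm (4:ℝ) Cb, mul_assoc]
        apply mul_le_mul_of_nonneg_left _ hCb
        rw [div_le_iff₀ hp0]
        nlinarith
      rw [hsplit3]
      calc |(∫ ξ in (0:ℝ)..1, (1 - ξ / lam) * r ξ)
            + ∫ ξ in (1:ℝ)..lam, (1 - ξ / lam) * r ξ|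
          ≤ |∫ ξ in (0:ℝ)..1, (1 - ξ / lam) * r ξ|
            + |∫ ξ in (1:ℝ)..lam, (1 - ξ / lam) * r ξ| := abs_add_le _ _
        _ ≤ (A₀ + ‖c₀‖) + 4 * Cb * lam ^ ((1:ℝ)/2 - ε') := by
            exact add_le_add hp1 hp2
    have hupper : P ≤ D + 4 * Cb * lam ^ ((1:ℝ)/2 - ε') := by
      rw [hsplit, hDdef]
      obtain ⟨h1a, h1b⟩ := abs_le.mp hb1
      obtain ⟨h2a, h2b⟩ := abs_le.mp hb2
      obtain ⟨h3a, h3b⟩ := abs_le.mp hb3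
      have hPv : ‖c₀‖ * (2 / v ^ 2) + ‖c₀‖ * (1 / |v| + 1 / v ^ 2)
          = ‖c₀‖ * (3 / v ^ 2 + 1 / |v|) := by ring
      linarith
    linarith [hlower, hupper]
  -- endgame
  have key2 : ∀ lam : ℝ, 1 ≤ lam →
      c ≤ D * lam ^ (-(1/2 : ℝ)) + 4 * Cb * lam ^ (-ε') := by
    intro lam hlam
    have hlam0 : (0:ℝ) < lam := by linarith
    have h1 := key lam hlam
    have h2 := mul_le_mul_of_nonneg_right h1 (Real.rpow_nonneg hlam0.le (-(1/2 : ℝ)))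
    have hsqrt : Real.sqrt lam = lam ^ ((1:ℝ)/2) := by
      rw [Real.sqrt_eq_rpow]
    have e1 : c * Real.sqrt lam * lam ^ (-(1/2:ℝ)) = c := by
      rw [hsqrt, mul_assoc, ← Real.rpow_add hlam0]
      norm_num
    have e2 : (D + 4 * Cb * lam ^ ((1:ℝ)/2 - ε')) * lam ^ (-(1/2:ℝ))
        = D * lam ^ (-(1/2:ℝ)) + 4 * Cb * lam ^ (-ε') := by
      rw [add_mul, mul_assoc, mul_assoc, ← Real.rpow_add hlam0,
        show (1:ℝ)/2 - ε' + -(1/2:ℝ) = -ε' by ring]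
      ring
    rw [e1] at h2
    rw [e2] at h2
    exact h2
  have hlim : Tendsto (fun lam : ℝ => D * lam ^ (-(1/2:ℝ)) + 4 * Cb * lam ^ (-ε'))
      atTop (nhds 0) := by
    have t1 := (tendsto_rpow_neg_atTop (by norm_num : (0:ℝ) < 1/2)).const_mul D
    have t2 := (tendsto_rpow_neg_atTop hε'0).const_mul (4 * Cb)
    simpa using t1.add t2
  have hc_le : c ≤ 0 :=
    ge_of_tendsto hlim (by
      filter_upwards [eventually_ge_atTop (1:ℝ)] with lam hlam using key2 lam hlam)
  linarith

end Crit

/-- Inverse oscillatory integral problem: if the oscillatory integral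
`I(λ) = ∫₀¹ e^{-iλφ(s)} a₀(s) ds` over the circle (`φ`, `a₀` smooth
1-periodic, `a₀ > 0`) satisfies `I(λ) = c₀ + O(|λ|^{-1/2-ε})`, then
`φ ≡ 0`. -/
theorem inverse_oscillatory_integral
    (φ a₀ : ℝ → ℝ)
    (hφ : ContDiff ℝ (⊤ : ℕ∞) φ) (hφper : Function.Periodic φ 1)
    (ha₀ : ContDiff ℝ (⊤ : ℕ∞) a₀) (ha₀per : Function.Periodic a₀ 1)
    (ha₀pos : ∀ s, 0 < a₀ s)
    (c₀ : ℂ) (ε Cb : ℝ) (hε : 0 < ε)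
    (hI : ∀ lam : ℝ, 1 ≤ |lam| →
      ‖(∫ s in (0:ℝ)..1, Complex.exp (-Complex.I * lam * φ s) * (a₀ s : ℂ)) - c₀‖
        ≤ Cb * |lam| ^ (-(1 / 2 : ℝ) - ε)) :
    ∀ s, φ s = 0 := by
  have hd : Differentiable ℝ φ := hφ.differentiable (by simp)
  obtain ⟨p, hp0, hpmax⟩ := periodic_max_crit hd hφper
  have hnegper : Function.Periodic (fun s => -φ s) 1 := by
    intro x; simp [hφper x]
  obtain ⟨q, hq0, hqmin⟩ := periodic_max_crit (f := fun s => -φ s) hd.neg hnegper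
  have hq0' : deriv φ q = 0 := by
    have h := deriv.neg (f := φ) (x := q)
    rw [show deriv (-φ) q = deriv (fun s => -φ s) q from rfl, hq0] at h
    linarith [h]
  have h1 : φ p = 0 :=
    crit_val_eq_zero φ a₀ hφ hφper ha₀.continuous ha₀per ha₀pos c₀ ε Cb hε hI p hp0
  have h2 : φ q = 0 :=
    crit_val_eq_zero φ a₀ hφ hφper ha₀.continuous ha₀per ha₀pos c₀ ε Cb hε hI q hq0'
  intro s
  have hmax := hpmax s
  have hmin := hqmin s
  rw [h1] at hmax
  have : -φ s ≤ -φ q := hmin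
  rw [h2] at this
  linarith
end
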